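/- Let F_A be the free group over a finite alphabet A and let H, K be nontrivial finitely generated subgroups of F_A. If the core graphs C(H) and C(K) of their Stallings automata are isomorphic as labeled graphs, then H and K are conjugate in F_A; conversely, conjugate subgroups have isomorphic core graphs. -/

import Mathlib

/-!
A vertex `q` of an inverse automaton recognising `S` determines the right coset `S g` of the words
`g` reaching it, and a reduced word `ℓ` labels a loop at `q` iff `g ℓ g⁻¹ ∈ S`. If moreover `c` is
cyclically reduced and `g c g⁻¹ ∈ S`, then the coset `S g` is realised by a vertex carrying the
loop `c`: induct on `g`, replacing `c` by a rotation whenever the last letter of `g` cancels.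

If `S₂ = g₀ S₁ g₀⁻¹`, sending the core vertex of `S₁ g` to the vertex of `S₂ g₀ g` is therefore a
bijection between the cores, and it preserves edges because every core edge begins a reduced loop.
Conversely, a reduced loop at a core vertex never leaves the core, so the core seen from a core
vertex of `H` reached by `w` recognises `w⁻¹ H w`; a core isomorphism carries this to `w'⁻¹ K w'`.
-/

/-- Reading a word over `Ã = A × Bool` from a state of a partial deterministic automaton. -/
def readWord {Q A : Type} (δ : Q → A × Bool → Option Q) : Q → List (A × Bool) → Option Q
  | q, [] => some q
  | q, x :: w =>
    match δ q x with
    | none => none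
    | some q' => readWord δ q' w

/-- The vertices of the core `C(K)` of a Stallings automaton: those lying on a loop
labeled by a nonempty cyclically reduced word (i.e. a word `u` with `u ++ u` reduced). -/
def coreSet {Q A : Type} [DecidableEq A] (δ : Q → A × Bool → Option Q) : Set Q :=
  {q | ∃ u : List (A × Bool), u ≠ [] ∧ FreeGroup.reduce (u ++ u) = u ++ u ∧
        readWord δ q u = some q}

open FreeGroup

namespace FreeGroup

variable {α : Type*} {L s t : List (α × Bool)} {a b : α × Bool}

def invLetter (a : α × Bool) : α × Bool := (a.1, !a.2)

@[simp]
theorem invLetter_invLetter : invLetter (invLetter a) = a := by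
  simp [invLetter]

theorem invRev_singleton : invRev [a] = [invLetter a] := rfl

theorem mk_invLetter : mk [invLetter a] = (mk [a])⁻¹ := by
  rw [inv_mk, invRev_singleton]

theorem not_reducedPair_iff : ¬(a.1 = b.1 → a.2 = b.2) ↔ b = invLetter a := by
  obtain ⟨a₁, a₂⟩ := a
  obtain ⟨b₁, b₂⟩ := b
  cases a₂ <;> cases b₂ <;> simp [invLetter, eq_comm]

theorem forall_mem_reducedPair_iff {o : Option (α × Bool)} :
    (∀ b ∈ o, a.1 = b.1 → a.2 = b.2) ↔ o ≠ some (invLetter a) := by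
  cases o <;> simp [← not_reducedPair_iff]

theorem forall_mem_reducedPair_iff' {o : Option (α × Bool)} :
    (∀ b ∈ o, b.1 = a.1 → b.2 = a.2) ↔ o ≠ some (invLetter a) := by
  simp only [@eq_comm _ _ a.1, @eq_comm _ _ a.2, forall_mem_reducedPair_iff]

theorem isReduced_cons_iff : IsReduced (a :: L) ↔ IsReduced L ∧ L.head? ≠ some (invLetter a) := by
  rw [IsReduced, List.isChain_cons, and_comm, forall_mem_reducedPair_iff]
  rfl

theorem isReduced_append_iff :
    IsReduced (s ++ t) ↔
      IsReduced s ∧ IsReduced t ∧ ∀ a ∈ s.getLast?, ∀ b ∈ t.head?, a.1 = b.1 → a.2 = b.2 :=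
  List.isChain_append

theorem isReduced_append_singleton_iff :
    IsReduced (L ++ [a]) ↔ IsReduced L ∧ L.getLast? ≠ some (invLetter a) := by
  rw [isReduced_append_iff, ← forall_mem_reducedPair_iff']
  simp only [IsReduced.singleton, true_and, List.head?_cons, Option.mem_def, Option.some.injEq,
    forall_eq']

theorem isCyclicallyReduced_cons_iff :
    IsCyclicallyReduced (a :: L) ↔ IsReduced (a :: L ++ [a]) := by
  rw [isCyclicallyReduced_iff, isReduced_append_singleton_iff, ← forall_mem_reducedPair_iff']
  simp only [List.head?_cons, Option.mem_def, Option.some.injEq, forall_eq']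

theorem isReduced_append_self_iff : IsReduced (L ++ L) ↔ IsCyclicallyReduced L := by
  rw [isReduced_append_iff, isCyclicallyReduced_iff]
  exact ⟨fun ⟨h, _, h'⟩ => ⟨h, h'⟩, fun ⟨h, h'⟩ => ⟨h, h, h'⟩⟩

theorem IsCyclicallyReduced.rotate (h : IsCyclicallyReduced (s ++ t)) :
    IsCyclicallyReduced (t ++ s) := by
  rw [← isReduced_append_self_iff]
  exact (h.flatten_replicate 3).isReduced.infix ⟨s, t, by simp⟩

variable [DecidableEq α]

theorem IsReduced.invRev (h : IsReduced L) : IsReduced (invRev L) := by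
  rw [isReduced_iff_reduce_eq] at h ⊢
  rw [reduce_invRev, h]

theorem IsCyclicallyReduced.invRev (h : IsCyclicallyReduced L) :
    IsCyclicallyReduced (invRev L) := by
  rw [← isReduced_append_self_iff] at h ⊢
  simpa [invRev_append] using h.invRev

theorem isReduced_append_append_invRev {G c : List (α × Bool)} {l : α × Bool}
    (hG : IsReduced (G ++ [l])) (hc : IsReduced c) (hcne : c ≠ [])
    (hhead : c.head? ≠ some (invLetter l)) (hlast : c.getLast? ≠ some l) :
    IsReduced (G ++ [l] ++ c ++ invRev (G ++ [l])) := by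
  have hinvG : invRev (G ++ [l]) = [invLetter l] ++ invRev G := by
    rw [invRev_append, invRev_singleton]
  have hleft : IsReduced (G ++ [l] ++ c) :=
    hG.append_overlap (isReduced_cons_iff.2 ⟨hc, hhead⟩) (List.cons_ne_nil _ _)
  have hright : IsReduced (c ++ invRev (G ++ [l])) := by
    rw [hinvG, ← List.append_assoc]
    refine IsReduced.append_overlap ?_ (hinvG ▸ hG.invRev) (List.cons_ne_nil _ _)
    exact isReduced_append_singleton_iff.2 ⟨hc, by rwa [invLetter_invLetter]⟩
  exact hleft.append_overlap hright hcne

end FreeGroup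

section Automaton

variable {A Q : Type} {δ : Q → A × Bool → Option Q} {q s m : Q} {x : A × Bool}
  {u v w : List (A × Bool)}

@[simp]
theorem readWord_nil : readWord δ q [] = some q := rfl

theorem readWord_cons : readWord δ q (x :: w) = (δ q x).bind (readWord δ · w) := by
  rw [readWord]
  cases δ q x <;> rfl

@[simp]
theorem readWord_singleton : readWord δ q [x] = δ q x := by
  rw [readWord_cons]
  cases δ q x <;> rfl

theorem readWord_append : readWord δ q (u ++ v) = (readWord δ q u).bind (readWord δ · v) := by
  induction u generalizing q with
  | nil => rfl
  | cons x u ih =>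
    rw [List.cons_append, readWord_cons, readWord_cons, Option.bind_assoc]
    simp only [ih]

theorem readWord_cons_eq_some :
    readWord δ q (x :: w) = some s ↔ ∃ m, δ q x = some m ∧ readWord δ m w = some s := by
  rw [readWord_cons, Option.bind_eq_some_iff]

theorem readWord_append_eq_some :
    readWord δ q (u ++ v) = some s ↔ ∃ m, readWord δ q u = some m ∧ readWord δ m v = some s := by
  rw [readWord_append, Option.bind_eq_some_iff]

theorem readWord_rotate (h : readWord δ q (u ++ v) = some q) (hu : readWord δ q u = some m) :
    readWord δ m (v ++ u) = some m := by
  obtain ⟨m', hm', hv⟩ := readWord_append_eq_some.1 h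
  obtain rfl : m' = m := Option.some.inj (hm'.symm.trans hu)
  exact readWord_append_eq_some.2 ⟨q, hv, hu⟩

end Automaton

section Restrict

variable {X Q Q₁ Q₂ : Type}

open Classical in
noncomputable def restrictTo (δ : Q → X → Option Q) (C : Set Q) : C → X → Option C :=
  fun q x => (δ q x).bind fun r => if h : r ∈ C then some ⟨r, h⟩ else none

theorem restrictTo_eq_some {δ : Q → X → Option Q} {C : Set Q} {q r : C} {x : X} :
    restrictTo δ C q x = some r ↔ δ q x = some (r : Q) := by
  simp [restrictTo, Option.bind_eq_some_iff, Subtype.ext_iff]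

def IsAutomatonIso (δ₁ : Q₁ → X → Option Q₁) (δ₂ : Q₂ → X → Option Q₂) (e : Q₁ ≃ Q₂) : Prop :=
  ∀ p q x, δ₁ p x = some q ↔ δ₂ (e p) x = some (e q)

theorem isAutomatonIso_restrictTo_iff {δ₁ : Q₁ → X → Option Q₁} {δ₂ : Q₂ → X → Option Q₂}
    {C₁ : Set Q₁} {C₂ : Set Q₂} {e : C₁ ≃ C₂} :
    IsAutomatonIso (restrictTo δ₁ C₁) (restrictTo δ₂ C₂) e ↔
      ∀ (p q : C₁) x, δ₁ p x = some (q : Q₁) ↔ δ₂ (e p) x = some (e q : Q₂) := by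
  simp only [IsAutomatonIso, restrictTo_eq_some]

theorem IsAutomatonIso.apply_eq_map {δ₁ : Q₁ → X → Option Q₁} {δ₂ : Q₂ → X → Option Q₂}
    {e : Q₁ ≃ Q₂} (he : IsAutomatonIso δ₁ δ₂ e) (q : Q₁) (x : X) :
    δ₂ (e q) x = (δ₁ q x).map e := by
  cases h : δ₁ q x with
  | some r => exact (he q r x).1 h
  | none =>
    rw [Option.map_none, Option.eq_none_iff_forall_ne_some]
    intro r' hr'
    rw [← e.apply_symm_apply r', ← he] at hr'
    simp [h] at hr'

variable {A : Type} {δ : Q → A × Bool → Option Q} {w : List (A × Bool)}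

theorem readWord_of_readWord_restrictTo {C : Set Q} {q s : C}
    (h : readWord (restrictTo δ C) q w = some s) : readWord δ q w = some (s : Q) := by
  induction w generalizing q with
  | nil => simp_all
  | cons x w ih =>
    obtain ⟨m, hm, hw⟩ := readWord_cons_eq_some.1 h
    exact readWord_cons_eq_some.2 ⟨m, restrictTo_eq_some.1 hm, ih hw⟩

theorem readWord_restrictTo_of_forall_mem {C : Set Q} {q s : C}
    (hw : readWord δ q w = some (s : Q))
    (hC : ∀ u, u <+: w → ∀ t, readWord δ q u = some t → t ∈ C) :
    readWord (restrictTo δ C) q w = some s := by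
  induction w generalizing q with
  | nil => simpa [Subtype.ext_iff] using hw
  | cons x w ih =>
    obtain ⟨m, hm, hw⟩ := readWord_cons_eq_some.1 hw
    have hmC : m ∈ C := hC [x] (by simp) m (by simpa using hm)
    refine readWord_cons_eq_some.2 ⟨⟨m, hmC⟩, restrictTo_eq_some.2 hm, ih hw fun u hu t ht => ?_⟩
    exact hC (x :: u) (List.cons_prefix_cons.2 ⟨rfl, hu⟩) t (readWord_cons_eq_some.2 ⟨m, hm, ht⟩)

theorem IsAutomatonIso.readWord_eq_map {δ₁ : Q₁ → A × Bool → Option Q₁}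
    {δ₂ : Q₂ → A × Bool → Option Q₂} {e : Q₁ ≃ Q₂} (he : IsAutomatonIso δ₁ δ₂ e) (q : Q₁) :
    readWord δ₂ (e q) w = (readWord δ₁ q w).map e := by
  induction w generalizing q with
  | nil => rfl
  | cons x w ih =>
    rw [readWord_cons, readWord_cons, he.apply_eq_map]
    cases δ₁ q x <;> simp [ih]

theorem IsAutomatonIso.readWord_iff {δ₁ : Q₁ → A × Bool → Option Q₁}
    {δ₂ : Q₂ → A × Bool → Option Q₂} {e : Q₁ ≃ Q₂} (he : IsAutomatonIso δ₁ δ₂ e) {q s : Q₁} :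
    readWord δ₂ (e q) w = some (e s) ↔ readWord δ₁ q w = some s := by
  rw [he.readWord_eq_map, Option.map_eq_some_iff]
  simp

end Restrict

section Inverse

variable {A Q : Type} {δ : Q → A × Bool → Option Q} {p q r s : Q} {x : A × Bool}
  {u v w : List (A × Bool)}

def IsInverse (δ : Q → A × Bool → Option Q) : Prop :=
  ∀ (p q : Q) (a : A) (b : Bool), δ p (a, b) = some q ↔ δ q (a, !b) = some p

namespace IsInverse

variable (hinv : IsInverse δ)
include hinv

theorem step_invLetter (h : δ p x = some q) : δ q (invLetter x) = some p :=
  (hinv p q x.1 x.2).1 h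

theorem step_invLetter_iff : δ q (invLetter x) = some p ↔ δ p x = some q :=
  ⟨fun h => by simpa using hinv.step_invLetter h, hinv.step_invLetter⟩

theorem eq_of_step (h : δ p x = some r) (h' : δ q x = some r) : p = q :=
  Option.some.inj ((hinv.step_invLetter h).symm.trans (hinv.step_invLetter h'))

theorem readWord_invRev (h : readWord δ q w = some s) : readWord δ s (invRev w) = some q := by
  induction w generalizing q with
  | nil => simpa [eq_comm] using h
  | cons x w ih =>
    obtain ⟨m, hm, hw⟩ := readWord_cons_eq_some.1 h
    rw [invRev_cons, invRev_singleton]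
    exact readWord_append_eq_some.2 ⟨m, ih hw, by simpa using hinv.step_invLetter hm⟩

theorem readWord_of_red (hred : Red u v) (h : readWord δ q u = some s) :
    readWord δ q v = some s := by
  induction hred with
  | refl => exact h
  | tail _ hstep ih =>
    obtain @⟨L₁, L₂, a, b⟩ := hstep
    obtain ⟨m, hL₁, hrest⟩ := readWord_append_eq_some.1 ih
    obtain ⟨m₁, hm₁, hrest⟩ := readWord_cons_eq_some.1 hrest
    obtain ⟨m₂, hm₂, hL₂⟩ := readWord_cons_eq_some.1 hrest
    obtain rfl : m₂ = m := Option.some.inj (hm₂.symm.trans (hinv.step_invLetter hm₁))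
    exact readWord_append_eq_some.2 ⟨m₂, hL₁, hL₂⟩

theorem readWord_reduce [DecidableEq A] (h : readWord δ q w = some s) :
    readWord δ q (reduce w) = some s :=
  hinv.readWord_of_red reduce.red h

theorem readWord_of_mk_eq [DecidableEq A] (h : readWord δ q u = some s) (hv : IsReduced v)
    (huv : mk u = mk v) : readWord δ q v = some s := by
  have := hinv.readWord_reduce h
  rwa [← toWord_mk, huv, toWord_mk, hv.reduce_eq] at this

end IsInverse

def Recognizes (δ : Q → A × Bool → Option Q) (p : Q) (S : Subgroup (FreeGroup A)) : Prop :=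
  ∀ w, IsReduced w → (mk w ∈ S ↔ readWord δ p w = some p)

theorem Recognizes.mem_of_readWord [DecidableEq A] {S : Subgroup (FreeGroup A)}
    (hrec : Recognizes δ p S) (hinv : IsInverse δ) (h : readWord δ p w = some p) : mk w ∈ S := by
  rw [← reduce.self, hrec _ (.of_reduce_eq reduce.idem)]
  exact hinv.readWord_reduce h

end Inverse

section CosetState

variable {A Q : Type} {δ : Q → A × Bool → Option Q} {p q q' r : Q}
  {S : Subgroup (FreeGroup A)} {g g' : FreeGroup A} {u v w ℓ : List (A × Bool)}

def IsCosetState (δ : Q → A × Bool → Option Q) (p : Q) (S : Subgroup (FreeGroup A))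
    (g : FreeGroup A) (q : Q) : Prop :=
  ∃ w, readWord δ p w = some q ∧ mk w * g⁻¹ ∈ S

theorem isCosetState_mk (h : readWord δ p w = some q) : IsCosetState δ p S (mk w) q :=
  ⟨w, h, by rw [mul_inv_cancel]; exact S.one_mem⟩

namespace IsCosetState

theorem of_mul_inv_mem (h : IsCosetState δ p S g q) (hg : g * g'⁻¹ ∈ S) :
    IsCosetState δ p S g' q := by
  obtain ⟨w, hw, hS⟩ := h
  exact ⟨w, hw, by simpa [mul_assoc] using S.mul_mem hS hg⟩

theorem mul_mk_of_readWord (h : IsCosetState δ p S g q) (hu : readWord δ q u = some r) :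
    IsCosetState δ p S (g * mk u) r := by
  obtain ⟨w, hw, hS⟩ := h
  refine ⟨w ++ u, readWord_append_eq_some.2 ⟨q, hw, hu⟩, ?_⟩
  rwa [← mul_mk, mul_inv_rev, mul_assoc, mul_inv_cancel_left]

theorem rotate (h : IsCosetState δ p S g q) (hloop : readWord δ q (u ++ v) = some q) :
    ∃ m, IsCosetState δ p S (g * mk u) m ∧ readWord δ m (v ++ u) = some m := by
  obtain ⟨m, hu, -⟩ := readWord_append_eq_some.1 hloop
  exact ⟨m, h.mul_mk_of_readWord hu, readWord_rotate hloop hu⟩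

variable [DecidableEq A] (hinv : IsInverse δ) (hrec : Recognizes δ p S)
include hinv hrec

theorem eq_iff_mul_inv_mem (h : IsCosetState δ p S g q) (h' : IsCosetState δ p S g' q') :
    q = q' ↔ g * g'⁻¹ ∈ S := by
  obtain ⟨w, hw, hS⟩ := h
  obtain ⟨w', hw', hS'⟩ := h'
  have key : g * g'⁻¹ = (mk w * g⁻¹)⁻¹ * (mk w * (mk w')⁻¹) * (mk w' * g'⁻¹) := by group
  rw [key, S.mul_mem_cancel_right hS', S.mul_mem_cancel_left (S.inv_mem hS)]
  constructor
  · rintro rfl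
    rw [inv_mk, mul_mk]
    exact hrec.mem_of_readWord hinv
      (readWord_append_eq_some.2 ⟨q, hw, hinv.readWord_invRev hw'⟩)
  · intro hww'
    have hz := (hrec _ isReduced_toWord).1 (by rwa [mk_toWord])
    have hq' := hinv.readWord_of_mk_eq (readWord_append_eq_some.2 ⟨p, hz, hw'⟩)
      (.of_reduce_eq (reduce.idem (L := w)))
      (by rw [← mul_mk, mk_toWord, inv_mul_cancel_right, reduce.self])
    exact Option.some.inj ((hinv.readWord_reduce hw).symm.trans hq')

theorem conj_mem_iff (h : IsCosetState δ p S g q) (hℓ : IsReduced ℓ) :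
    g * mk ℓ * g⁻¹ ∈ S ↔ readWord δ q ℓ = some q := by
  obtain ⟨w, hw, hS⟩ := h
  have key : mk w * mk ℓ * (mk w)⁻¹ = (mk w * g⁻¹) * (g * mk ℓ * g⁻¹) * (mk w * g⁻¹)⁻¹ := by
    group
  have hconj : mk w * mk ℓ * (mk w)⁻¹ ∈ S ↔ g * mk ℓ * g⁻¹ ∈ S := by
    rw [key, S.mul_mem_cancel_right (S.inv_mem hS), S.mul_mem_cancel_left hS]
  rw [← hconj, inv_mk, mul_mk, mul_mk]
  constructor
  · intro hmem
    have hz := (hrec _ isReduced_toWord).1 (by rwa [mk_toWord])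
    have hloop := readWord_append_eq_some.2 ⟨p, hinv.readWord_invRev hw,
      readWord_append_eq_some.2 ⟨p, hz, hw⟩⟩
    refine hinv.readWord_of_mk_eq hloop hℓ ?_
    simp only [← mul_mk, mk_toWord, ← inv_mk]
    group
  · intro hℓq
    exact hrec.mem_of_readWord hinv (readWord_append_eq_some.2 ⟨q,
      readWord_append_eq_some.2 ⟨q, hw, hℓq⟩, hinv.readWord_invRev hw⟩)

end IsCosetState

end CosetState

section KeyLemma

variable {A Q : Type} [DecidableEq A] {δ : Q → A × Bool → Option Q} {p : Q}
  {S : Subgroup (FreeGroup A)}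

theorem exists_isCosetState_mk_of_conj_mem (hinv : IsInverse δ) (hrec : Recognizes δ p S)
    {G : List (A × Bool)} (hG : IsReduced G) {c : List (A × Bool)} (hc : c ≠ [])
    (hcr : IsCyclicallyReduced c) (hmem : mk G * mk c * (mk G)⁻¹ ∈ S) :
    ∃ q, IsCosetState δ p S (mk G) q ∧ readWord δ q c = some q := by
  have of_readWord : ∀ {G c q}, readWord δ p G = some q → IsReduced c →
      mk G * mk c * (mk G)⁻¹ ∈ S → ∃ q, IsCosetState δ p S (mk G) q ∧ readWord δ q c = some q :=
    fun hG hc hmem =>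
      ⟨_, isCosetState_mk hG, ((isCosetState_mk hG).conj_mem_iff hinv hrec hc).1 hmem⟩
  induction G using List.reverseRecOn generalizing c with
  | nil => exact of_readWord rfl hcr.isReduced hmem
  | append_singleton G l ih =>
    have hG' : IsReduced G := hG.infix ⟨[], [l], by simp⟩
    -- Either `l` cancels against an end letter of `c`, and then `G` conjugates a rotation of `c`
    -- into `S`, or `G c G⁻¹` is reduced, hence a loop at `p`, so that `G` can be read from `p`.
    by_cases hA : c.head? = some (invLetter l)
    · obtain ⟨ct, rfl⟩ := List.head?_eq_some_iff.1 hA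
      have hconj : mk G * mk (ct ++ [invLetter l]) * (mk G)⁻¹ =
          mk (G ++ [l]) * mk (invLetter l :: ct) * (mk (G ++ [l]))⁻¹ := by
        simp only [← mul_mk, ← List.singleton_append (l := ct), mk_invLetter]
        group
      obtain ⟨q, hq, hloop⟩ :=
        ih hG' (by simp) (hcr.rotate (s := [invLetter l])) (hconj ▸ hmem)
      obtain ⟨m, hm, hloop'⟩ := hq.rotate hloop
      refine ⟨m, hm.of_mul_inv_mem ?_, hloop'⟩
      convert hmem using 1
      rw [← hconj, ← mul_mk, ← mul_mk, mk_invLetter]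
      group
    by_cases hB : c.getLast? = some l
    · obtain ⟨ct, rfl⟩ := List.getLast?_eq_some_iff.1 hB
      have hconj : mk G * mk ([l] ++ ct) * (mk G)⁻¹ =
          mk (G ++ [l]) * mk (ct ++ [l]) * (mk (G ++ [l]))⁻¹ := by
        simp only [← mul_mk]
        group
      obtain ⟨q, hq, hloop⟩ := ih hG' (by simp) hcr.rotate (hconj ▸ hmem)
      obtain ⟨m, hm, hloop'⟩ := hq.rotate hloop
      exact ⟨m, by rwa [mul_mk] at hm, hloop'⟩
    have hW := isReduced_append_append_invRev hG hcr.isReduced hc hA hB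
    have hloop := (hrec _ hW).1 (by simpa only [← mul_mk, ← inv_mk] using hmem)
    rw [List.append_assoc] at hloop
    obtain ⟨q, hGq, -⟩ := readWord_append_eq_some.1 hloop
    exact of_readWord hGq hcr.isReduced hmem

theorem exists_isCosetState_of_conj_mem (hinv : IsInverse δ) (hrec : Recognizes δ p S)
    {c : List (A × Bool)} (hc : c ≠ []) (hcr : IsCyclicallyReduced c) {g : FreeGroup A}
    (hg : g * mk c * g⁻¹ ∈ S) : ∃ q, IsCosetState δ p S g q ∧ readWord δ q c = some q := by
  simpa only [mk_toWord] using
    exists_isCosetState_mk_of_conj_mem hinv hrec isReduced_toWord hc hcr (by rwa [mk_toWord])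

end KeyLemma

section Core

variable {A Q : Type} [DecidableEq A] {δ : Q → A × Bool → Option Q} {q r t m : Q}
  {x : A × Bool} {u v g γ : List (A × Bool)}

theorem mem_coreSet_iff :
    q ∈ coreSet δ ↔ ∃ u, u ≠ [] ∧ IsCyclicallyReduced u ∧ readWord δ q u = some q := by
  simp only [coreSet, Set.mem_ofPred_eq, ← isReduced_iff_reduce_eq, isReduced_append_self_iff]

theorem mem_coreSet_of_readWord (hne : u ++ v ≠ []) (hcr : IsCyclicallyReduced (u ++ v))
    (hloop : readWord δ q (u ++ v) = some q) (hu : readWord δ q u = some m) : m ∈ coreSet δ :=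
  mem_coreSet_iff.2 ⟨v ++ u, by simpa [and_comm] using hne, hcr.rotate, readWord_rotate hloop hu⟩

theorem readWord_restrictTo_coreSet_of_isCyclicallyReduced (hq : q ∈ coreSet δ)
    (hcr : IsCyclicallyReduced γ) (hloop : readWord δ q γ = some q) :
    readWord (restrictTo δ (coreSet δ)) ⟨q, hq⟩ γ = some ⟨q, hq⟩ := by
  rcases eq_or_ne γ [] with rfl | hne
  · rfl
  refine readWord_restrictTo_of_forall_mem hloop fun u ⟨v, huv⟩ t ht => ?_
  subst huv
  exact mem_coreSet_of_readWord hne hcr hloop ht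

namespace IsInverse

variable (hinv : IsInverse δ)
include hinv

theorem mem_coreSet_of_step (hq : q ∈ coreSet δ) (hx : δ q x = some t)
    (hred : IsReduced (x :: g ++ [invLetter x])) (hg : readWord δ t g = some t) :
    t ∈ coreSet δ := by
  obtain ⟨u, hune, hcr, hloop⟩ := mem_coreSet_iff.1 hq
  by_cases hA : u.head? = some x
  · obtain ⟨u', rfl⟩ := List.head?_eq_some_iff.1 hA
    exact mem_coreSet_of_readWord (u := [x]) hune hcr hloop (by simpa using hx)
  by_cases hB : u.getLast? = some (invLetter x)
  · obtain ⟨u', rfl⟩ := List.getLast?_eq_some_iff.1 hB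
    obtain ⟨m, hm, hlast⟩ := readWord_append_eq_some.1 hloop
    obtain rfl : t = m :=
      Option.some.inj (hx.symm.trans (hinv.step_invLetter_iff.1 (by simpa using hlast)))
    exact mem_coreSet_of_readWord hune hcr hloop hm
  -- otherwise `t` lies on the cyclically reduced loop `x⁻¹ u x g`
  refine mem_coreSet_iff.2 ⟨invLetter x :: (u ++ [x] ++ g), List.cons_ne_nil _ _, ?_, ?_⟩
  · have hu : IsReduced (invLetter x :: u ++ [x]) :=
      isReduced_append_singleton_iff.2 ⟨isReduced_cons_iff.2 ⟨hcr.isReduced, by simpa using hA⟩,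
        by rwa [List.getLast?_cons_of_ne_nil hune]⟩
    rw [isCyclicallyReduced_cons_iff]
    convert hu.append_overlap hred (List.cons_ne_nil _ _) using 1
    simp
  · have hxq : δ t (invLetter x) = some q := hinv.step_invLetter hx
    refine readWord_cons_eq_some.2 ⟨q, hxq, ?_⟩
    rw [List.append_assoc]
    exact readWord_append_eq_some.2 ⟨q, hloop, readWord_cons_eq_some.2 ⟨t, hx, hg⟩⟩

theorem readWord_restrictTo_coreSet (hq : q ∈ coreSet δ) (hγ : IsReduced γ)
    (hloop : readWord δ q γ = some q) :
    readWord (restrictTo δ (coreSet δ)) ⟨q, hq⟩ γ = some ⟨q, hq⟩ := by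
  induction γ using List.bidirectionalRec generalizing q with
  | nil => rfl
  | singleton x => exact readWord_restrictTo_coreSet_of_isCyclicallyReduced hq .singleton hloop
  | cons_append x g y ih =>
    by_cases hcr : IsCyclicallyReduced (x :: g ++ [y])
    · exact readWord_restrictTo_coreSet_of_isCyclicallyReduced hq hcr hloop
    obtain rfl : y = invLetter x := by
      rw [isCyclicallyReduced_cons_append_iff, not_and, not_reducedPair_iff] at hcr
      rw [hcr hγ, invLetter_invLetter]
    obtain ⟨t, hxt, hrest⟩ := readWord_cons_eq_some.1 hloop
    obtain ⟨m, hg, hlast⟩ := readWord_append_eq_some.1 hrest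
    obtain rfl : m = t :=
      Option.some.inj ((hinv.step_invLetter_iff.1 (by simpa using hlast)).symm.trans hxt)
    have ht := hinv.mem_coreSet_of_step hq hxt hγ hg
    have hg' := ih ht (hγ.infix ⟨[x], [invLetter x], by simp⟩) hg
    exact readWord_cons_eq_some.2 ⟨⟨m, ht⟩, restrictTo_eq_some.2 hxt,
      readWord_append_eq_some.2 ⟨⟨m, ht⟩, hg', by simpa [restrictTo_eq_some] using hlast⟩⟩

theorem exists_readWord_cons (hx : δ q x = some r) (hr : r ∈ coreSet δ) :
    ∃ γ, IsReduced (x :: γ) ∧ readWord δ q (x :: γ) = some q := by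
  obtain ⟨v, hvne, hcr, hloop⟩ := mem_coreSet_iff.1 hr
  have hrq : δ r (invLetter x) = some q := hinv.step_invLetter hx
  by_cases hA : v.head? = some (invLetter x)
  · obtain ⟨v', rfl⟩ := List.head?_eq_some_iff.1 hA
    obtain ⟨m, hm, hv'⟩ := readWord_cons_eq_some.1 hloop
    obtain rfl : m = q := Option.some.inj (hm.symm.trans hrq)
    refine ⟨invRev v', ?_, readWord_cons_eq_some.2 ⟨r, hx, hinv.readWord_invRev hv'⟩⟩
    simpa [invRev_append, invRev_singleton] using
      (hcr.rotate (s := [invLetter x])).invRev.isReduced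
  by_cases hB : v.getLast? = some x
  · obtain ⟨v', rfl⟩ := List.getLast?_eq_some_iff.1 hB
    obtain ⟨m, hv', hm⟩ := readWord_append_eq_some.1 hloop
    obtain rfl : m = q := hinv.eq_of_step (by simpa using hm) hx
    exact ⟨v', hcr.rotate.isReduced, readWord_cons_eq_some.2 ⟨r, hx, hv'⟩⟩
  refine ⟨v ++ [invLetter x], ?_, readWord_cons_eq_some.2 ⟨r, hx,
    readWord_append_eq_some.2 ⟨r, hloop, by simpa using hrq⟩⟩⟩
  have hxv : IsReduced (x :: v) := isReduced_cons_iff.2 ⟨hcr.isReduced, hA⟩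
  have hvx : IsReduced (v ++ [invLetter x]) :=
    isReduced_append_singleton_iff.2 ⟨hcr.isReduced, by rwa [invLetter_invLetter]⟩
  simpa using hxv.append_overlap (L₁ := [x]) hvx hvne

end IsInverse

end Core

section Conjugacy

variable {A Q Q₁ Q₂ : Type} [DecidableEq A]

theorem exists_mem_coreSet_of_ne_bot {δ : Q → A × Bool → Option Q} {p : Q}
    {S : Subgroup (FreeGroup A)} (hinv : IsInverse δ) (hrec : Recognizes δ p S) (hS : S ≠ ⊥) :
    ∃ q ∈ coreSet δ, ∃ g, IsCosetState δ p S g q := by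
  obtain ⟨x, hxS, hx⟩ := S.bot_or_exists_ne_one.resolve_left hS
  set C := reduceCyclically.conjugator x.toWord
  set c := reduceCyclically x.toWord
  have hcr : IsCyclicallyReduced c := reduceCyclically.isCyclicallyReduced isReduced_toWord
  have hxc : mk C * mk c * (mk C)⁻¹ = x := by
    rw [inv_mk, mul_mk, mul_mk, reduceCyclically.conj_conjugator_reduceCyclically, mk_toWord]
  have hc : c ≠ [] := by
    intro h
    rw [h, ← one_eq_mk, mul_one, mul_inv_cancel] at hxc
    exact hx hxc.symm
  obtain ⟨q, hq, hloop⟩ := exists_isCosetState_of_conj_mem hinv hrec hc hcr (hxc ▸ hxS)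
  exact ⟨q, mem_coreSet_iff.2 ⟨c, hc, hcr, hloop⟩, _, hq⟩

theorem IsCosetState.conj_mem_iff_readWord_restrictTo {δ : Q → A × Bool → Option Q} {p q : Q}
    {S : Subgroup (FreeGroup A)} {g : FreeGroup A} {ℓ : List (A × Bool)}
    (hinv : IsInverse δ) (hrec : Recognizes δ p S) (h : IsCosetState δ p S g q)
    (hq : q ∈ coreSet δ) (hℓ : IsReduced ℓ) :
    g * mk ℓ * g⁻¹ ∈ S ↔ readWord (restrictTo δ (coreSet δ)) ⟨q, hq⟩ ℓ = some ⟨q, hq⟩ :=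
  (h.conj_mem_iff hinv hrec hℓ).trans
    ⟨hinv.readWord_restrictTo_coreSet hq hℓ, readWord_of_readWord_restrictTo⟩

theorem mem_iff_conj_mem_of_isAutomatonIso {δ₁ : Q₁ → A × Bool → Option Q₁} {p₁ : Q₁}
    {S₁ : Subgroup (FreeGroup A)} {δ₂ : Q₂ → A × Bool → Option Q₂} {p₂ : Q₂}
    {S₂ : Subgroup (FreeGroup A)} (hinv₁ : IsInverse δ₁) (hrec₁ : Recognizes δ₁ p₁ S₁)
    (hinv₂ : IsInverse δ₂) (hrec₂ : Recognizes δ₂ p₂ S₂) {e : coreSet δ₁ ≃ coreSet δ₂}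
    (he : IsAutomatonIso (restrictTo δ₁ (coreSet δ₁)) (restrictTo δ₂ (coreSet δ₂)) e)
    {q : coreSet δ₁} {g₁ g₂ : FreeGroup A} (h₁ : IsCosetState δ₁ p₁ S₁ g₁ q)
    (h₂ : IsCosetState δ₂ p₂ S₂ g₂ (e q)) (x : FreeGroup A) :
    x ∈ S₁ ↔ g₂ * g₁⁻¹ * x * (g₂ * g₁⁻¹)⁻¹ ∈ S₂ := by
  set ℓ := (g₁⁻¹ * x * g₁).toWord
  have hx₁ : x = g₁ * mk ℓ * g₁⁻¹ := by
    rw [mk_toWord]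
    group
  have hx₂ : g₂ * g₁⁻¹ * x * (g₂ * g₁⁻¹)⁻¹ = g₂ * mk ℓ * g₂⁻¹ := by
    rw [hx₁]
    group
  rw [hx₂, hx₁, h₁.conj_mem_iff_readWord_restrictTo hinv₁ hrec₁ q.2 isReduced_toWord,
    h₂.conj_mem_iff_readWord_restrictTo hinv₂ hrec₂ (e q).2 isReduced_toWord, he.readWord_iff]

end Conjugacy

section ConjugateState

variable {A Q₁ Q₂ : Type} {δ₁ : Q₁ → A × Bool → Option Q₁} {p₁ : Q₁}
  {S₁ : Subgroup (FreeGroup A)} {δ₂ : Q₂ → A × Bool → Option Q₂} {p₂ : Q₂}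
  {S₂ : Subgroup (FreeGroup A)} {g₀ : FreeGroup A} {q r : Q₁} {q' r' : Q₂} {x : A × Bool}

def IsConjugateState (δ₁ : Q₁ → A × Bool → Option Q₁) (p₁ : Q₁) (S₁ : Subgroup (FreeGroup A))
    (δ₂ : Q₂ → A × Bool → Option Q₂) (p₂ : Q₂) (S₂ : Subgroup (FreeGroup A)) (g₀ : FreeGroup A)
    (q : Q₁) (q' : Q₂) : Prop :=
  ∃ g, IsCosetState δ₁ p₁ S₁ g q ∧ IsCosetState δ₂ p₂ S₂ (g₀ * g) q'

theorem IsConjugateState.symm (h : IsConjugateState δ₁ p₁ S₁ δ₂ p₂ S₂ g₀ q q') :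
    IsConjugateState δ₂ p₂ S₂ δ₁ p₁ S₁ g₀⁻¹ q' q := by
  obtain ⟨g, h₁, h₂⟩ := h
  exact ⟨g₀ * g, h₂, by rwa [inv_mul_cancel_left]⟩

theorem isConjugateState_inv_iff :
    IsConjugateState δ₂ p₂ S₂ δ₁ p₁ S₁ g₀⁻¹ q' q ↔ IsConjugateState δ₁ p₁ S₁ δ₂ p₂ S₂ g₀ q q' :=
  ⟨fun h => by simpa using h.symm, IsConjugateState.symm⟩

theorem conj_mem_symm (hconj : ∀ x, x ∈ S₁ ↔ g₀ * x * g₀⁻¹ ∈ S₂) (y : FreeGroup A) :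
    y ∈ S₂ ↔ g₀⁻¹ * y * g₀⁻¹⁻¹ ∈ S₁ := by
  rw [hconj, inv_inv]
  group

variable [DecidableEq A] (hinv₁ : IsInverse δ₁) (hrec₁ : Recognizes δ₁ p₁ S₁) (hinv₂ : IsInverse δ₂)
  (hrec₂ : Recognizes δ₂ p₂ S₂) (hconj : ∀ x, x ∈ S₁ ↔ g₀ * x * g₀⁻¹ ∈ S₂)
include hinv₁ hrec₁ hinv₂ hrec₂ hconj

theorem IsConjugateState.right_unique (h : IsConjugateState δ₁ p₁ S₁ δ₂ p₂ S₂ g₀ q q')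
    (h' : IsConjugateState δ₁ p₁ S₁ δ₂ p₂ S₂ g₀ q r') : q' = r' := by
  obtain ⟨g, h₁, h₂⟩ := h
  obtain ⟨g', h₁', h₂'⟩ := h'
  rw [h₂.eq_iff_mul_inv_mem hinv₂ hrec₂ h₂']
  convert (hconj _).1 ((h₁.eq_iff_mul_inv_mem hinv₁ hrec₁ h₁').1 rfl) using 1
  group

theorem IsConjugateState.left_unique (h : IsConjugateState δ₁ p₁ S₁ δ₂ p₂ S₂ g₀ q q')
    (h' : IsConjugateState δ₁ p₁ S₁ δ₂ p₂ S₂ g₀ r q') : q = r :=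
  h.symm.right_unique hinv₂ hrec₂ hinv₁ hrec₁ (conj_mem_symm hconj) h'.symm

theorem exists_isConjugateState (hconn₁ : ∀ q, ∃ w, readWord δ₁ p₁ w = some q)
    (hq : q ∈ coreSet δ₁) : ∃ q' ∈ coreSet δ₂, IsConjugateState δ₁ p₁ S₁ δ₂ p₂ S₂ g₀ q q' := by
  obtain ⟨c, hc, hcr, hloop⟩ := mem_coreSet_iff.1 hq
  obtain ⟨w, hw⟩ := hconn₁ q
  have hmem := ((isCosetState_mk hw).conj_mem_iff hinv₁ hrec₁ hcr.isReduced).2 hloop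
  obtain ⟨q', hq', hloop'⟩ := exists_isCosetState_of_conj_mem hinv₂ hrec₂ hc hcr
    (g := g₀ * mk w) (by convert (hconj _).1 hmem using 1; group)
  exact ⟨q', mem_coreSet_iff.2 ⟨c, hc, hcr, hloop'⟩, mk w, isCosetState_mk hw, hq'⟩

theorem IsConjugateState.step (h : IsConjugateState δ₁ p₁ S₁ δ₂ p₂ S₂ g₀ q q')
    (hx : δ₁ q x = some r) (hr : r ∈ coreSet δ₁) :
    ∃ r', δ₂ q' x = some r' ∧ IsConjugateState δ₁ p₁ S₁ δ₂ p₂ S₂ g₀ r r' := by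
  obtain ⟨g, h₁, h₂⟩ := h
  obtain ⟨γ, hγ, hloop⟩ := hinv₁.exists_readWord_cons hx hr
  have hmem := (hconj _).1 ((h₁.conj_mem_iff hinv₁ hrec₁ hγ).2 hloop)
  have hloop' := (h₂.conj_mem_iff hinv₂ hrec₂ hγ).1 (by convert hmem using 1; group)
  obtain ⟨r', hr', -⟩ := readWord_cons_eq_some.1 hloop'
  refine ⟨r', hr', g * mk [x], h₁.mul_mk_of_readWord (by simpa using hx), ?_⟩
  rw [← mul_assoc]
  exact h₂.mul_mk_of_readWord (by simpa using hr')

theorem exists_isAutomatonIso_of_conj (hconn₁ : ∀ q, ∃ w, readWord δ₁ p₁ w = some q)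
    (hconn₂ : ∀ q, ∃ w, readWord δ₂ p₂ w = some q) :
    ∃ e : coreSet δ₁ ≃ coreSet δ₂,
      IsAutomatonIso (restrictTo δ₁ (coreSet δ₁)) (restrictTo δ₂ (coreSet δ₂)) e := by
  have hconj' := conj_mem_symm hconj
  choose f hf using fun q : coreSet δ₁ =>
    exists_isConjugateState hinv₁ hrec₁ hinv₂ hrec₂ hconj hconn₁ q.2
  let F : coreSet δ₁ → coreSet δ₂ := fun q => ⟨f q, (hf q).1⟩
  have hF : Function.Bijective F := by
    refine ⟨fun a b hab => Subtype.ext ((hf a).2.left_unique hinv₁ hrec₁ hinv₂ hrec₂ hconj ?_),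
      fun q' => ?_⟩
    · rw [show f a = f b from congrArg Subtype.val hab]
      exact (hf b).2
    · obtain ⟨q, hq, hrel⟩ :=
        exists_isConjugateState hinv₂ hrec₂ hinv₁ hrec₁ hconj' hconn₂ q'.2
      exact ⟨⟨q, hq⟩, Subtype.ext ((hf _).2.right_unique hinv₁ hrec₁ hinv₂ hrec₂ hconj
        (isConjugateState_inv_iff.1 hrel))⟩
  refine ⟨Equiv.ofBijective F hF, fun a b x => ?_⟩
  simp only [restrictTo_eq_some, Equiv.ofBijective_apply, F]
  constructor
  · intro hx
    obtain ⟨r', hr', hrel⟩ := (hf a).2.step hinv₁ hrec₁ hinv₂ hrec₂ hconj hx b.2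
    rwa [hrel.right_unique hinv₁ hrec₁ hinv₂ hrec₂ hconj (hf b).2] at hr'
  · intro hx
    obtain ⟨r, hr, hrel⟩ := (hf a).2.symm.step hinv₂ hrec₂ hinv₁ hrec₁ hconj' hx (hf b).1
    rwa [(isConjugateState_inv_iff.1 hrel).left_unique hinv₁ hrec₁ hinv₂ hrec₂ hconj (hf b).2]
      at hr

end ConjugateState

theorem stmt_18_general {A QH QK : Type} [DecidableEq A]
    (H K : Subgroup (FreeGroup A))
    (δH : QH → A × Bool → Option QH) (pH : QH)
    (δK : QK → A × Bool → Option QK) (pK : QK)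
    -- (QH, δH, pH) is the Stallings automaton of H:
    (hinvH : ∀ (p q : QH) (a : A) (b : Bool), δH p (a, b) = some q ↔ δH q (a, !b) = some p)
    (hconnH : ∀ q : QH, ∃ w : List (A × Bool), readWord δH pH w = some q)
    (hlinkH : ∀ w : List (A × Bool), FreeGroup.reduce w = w →
      (FreeGroup.mk w ∈ H ↔ readWord δH pH w = some pH))
    -- (QK, δK, pK) is the Stallings automaton of K:
    (hinvK : ∀ (p q : QK) (a : A) (b : Bool), δK p (a, b) = some q ↔ δK q (a, !b) = some p)
    (hconnK : ∀ q : QK, ∃ w : List (A × Bool), readWord δK pK w = some q)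
    (hlinkK : ∀ w : List (A × Bool), FreeGroup.reduce w = w →
      (FreeGroup.mk w ∈ K ↔ readWord δK pK w = some pK))
    (hHbot : H ≠ ⊥) :
    -- H and K are conjugate iff the cores are isomorphic labeled graphs
    (∃ g : FreeGroup A, ∀ x : FreeGroup A, x ∈ H ↔ g * x * g⁻¹ ∈ K) ↔
      (∃ e : {q : QH // q ∈ coreSet δH} ≃ {q : QK // q ∈ coreSet δK},
        ∀ (p q : {q : QH // q ∈ coreSet δH}) (x : A × Bool),
          δH p.1 x = some q.1 ↔ δK (e p).1 x = some (e q).1) := by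
  have hrecH : Recognizes δH pH H := fun w hw => hlinkH w hw.reduce_eq
  have hrecK : Recognizes δK pK K := fun w hw => hlinkK w hw.reduce_eq
  constructor
  · rintro ⟨g, hg⟩
    obtain ⟨e, he⟩ := exists_isAutomatonIso_of_conj hinvH hrecH hinvK hrecK hg hconnH hconnK
    exact ⟨e, isAutomatonIso_restrictTo_iff.1 he⟩
  · rintro ⟨e, he⟩
    obtain ⟨q, hq, g, hg⟩ := exists_mem_coreSet_of_ne_bot hinvH hrecH hHbot
    obtain ⟨w, hw⟩ := hconnK (e ⟨q, hq⟩)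
    exact ⟨_, mem_iff_conj_mem_of_isAutomatonIso hinvH hrecH hinvK hrecK
      (isAutomatonIso_restrictTo_iff.2 he) (q := ⟨q, hq⟩) hg (isCosetState_mk hw)⟩

/-- Two nontrivial f.g. subgroups `H, K ≤ F_A`, with Stallings automata
`(QH, δH, pH)` and `(QK, δK, pK)`, are conjugate in `F_A` iff the cores of their
Stallings automata are isomorphic as `Ã`-labeled graphs. -/
theorem stmt_18 {A QH QK : Type} [DecidableEq A] [Fintype QH] [Fintype QK]
    (H K : Subgroup (FreeGroup A))
    (δH : QH → A × Bool → Option QH) (pH : QH)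
    (δK : QK → A × Bool → Option QK) (pK : QK)
    -- (QH, δH, pH) is the Stallings automaton of H:
    (hinvH : ∀ (p q : QH) (a : A) (b : Bool), δH p (a, b) = some q ↔ δH q (a, !b) = some p)
    (hconnH : ∀ q : QH, ∃ w : List (A × Bool), readWord δH pH w = some q)
    (hdegH : ∀ q : QH, q ≠ pH → 2 ≤ {x : A × Bool | (δH q x).isSome}.ncard)
    (hlinkH : ∀ w : List (A × Bool), FreeGroup.reduce w = w →
      (FreeGroup.mk w ∈ H ↔ readWord δH pH w = some pH))
    -- (QK, δK, pK) is the Stallings automaton of K: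
    (hinvK : ∀ (p q : QK) (a : A) (b : Bool), δK p (a, b) = some q ↔ δK q (a, !b) = some p)
    (hconnK : ∀ q : QK, ∃ w : List (A × Bool), readWord δK pK w = some q)
    (hdegK : ∀ q : QK, q ≠ pK → 2 ≤ {x : A × Bool | (δK q x).isSome}.ncard)
    (hlinkK : ∀ w : List (A × Bool), FreeGroup.reduce w = w →
      (FreeGroup.mk w ∈ K ↔ readWord δK pK w = some pK))
    (hHbot : H ≠ ⊥) (hKbot : K ≠ ⊥) :
    -- H and K are conjugate iff the cores are isomorphic labeled graphs
    (∃ g : FreeGroup A, ∀ x : FreeGroup A, x ∈ H ↔ g * x * g⁻¹ ∈ K) ↔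
      (∃ e : {q : QH // q ∈ coreSet δH} ≃ {q : QK // q ∈ coreSet δK},
        ∀ (p q : {q : QH // q ∈ coreSet δH}) (x : A × Bool),
          δH p.1 x = some q.1 ↔ δK (e p).1 x = some (e q).1) :=
  stmt_18_general H K δH pH δK pK hinvH hconnH hlinkH hinvK hconnK hlinkK hHbot
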